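/- Let U be a unitary on ℂ² ⊗ H (H finite-dimensional) and suppose the conjugation channel E(ρ) = UρU† satisfies: for every density operator ρ on ℂ² ⊗ H and every one-qubit pure state |ψ⟩, if the reduced state of ρ on the first qubit equals |ψ⟩⟨ψ|, then the reduced state of UρU† on the first qubit also equals |ψ⟩⟨ψ|. Then U = e^{iθ}(I₂ ⊗ V) for some unitary V on H and phase θ ∈ ℝ. -/

import Mathlib

open Matrix Kronecker ComplexOrder

noncomputable section

/-- Outer product `|ψ⟩⟨ψ|`. -/
def proj {m : Type*} (ψ : m → ℂ) : Matrix m m ℂ :=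
  Matrix.of fun a b => ψ a * star (ψ b)

/-- The reduced state on the first qubit: partial trace over `H` (the second factor). -/
def ptraceH {d : ℕ} (σ : Matrix (Fin 2 × Fin d) (Fin 2 × Fin d) ℂ) :
    Matrix (Fin 2) (Fin 2) ℂ :=
  Matrix.of fun a b => ∑ x, σ (a, x) (b, x)

lemma proj_conj {n : Type*} [Fintype n] (U : Matrix n n ℂ) (φ : n → ℂ) :
    U * proj φ * Uᴴ = proj (U.mulVec φ) := by
  ext i j
  simp only [proj, Matrix.mul_apply, Matrix.conjTranspose_apply, Matrix.mulVec,
    dotProduct, Matrix.of_apply, star_sum, star_mul', Finset.sum_mul, Finset.mul_sum]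
  refine Finset.sum_congr rfl fun l _ => Finset.sum_congr rfl fun k _ => ?_
  ring

lemma proj_psd {n : Type*} [Fintype n] (φ : n → ℂ) : (proj φ).PosSemidef := by
  rw [Matrix.posSemidef_iff_dotProduct_mulVec]
  constructor
  · ext i j
    simp [proj, Matrix.conjTranspose_apply, mul_comm]
  · intro x
    have : star x ⬝ᵥ (proj φ).mulVec x
        = star (∑ j, star (φ j) * x j) * (∑ j, star (φ j) * x j) := by
      simp only [proj, Matrix.mulVec, dotProduct, Matrix.of_apply, star_sum, star_mul',
        Finset.sum_mul, Finset.mul_sum, Pi.star_apply, star_star]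
      rw [Finset.sum_comm]
      refine Finset.sum_congr rfl fun i _ => Finset.sum_congr rfl fun j _ => ?_
      ring
    rw [this]
    exact star_mul_self_nonneg _

lemma proj_trace {n : Type*} [Fintype n] (φ : n → ℂ) (hφ : (∑ i, ‖φ i‖ ^ 2) = 1) :
    (proj φ).trace = 1 := by
  have : (proj φ).trace = ((∑ i, ‖φ i‖ ^ 2 : ℝ) : ℂ) := by
    simp only [Matrix.trace, Matrix.diag, proj, Matrix.of_apply, Complex.ofReal_sum]
    refine Finset.sum_congr rfl fun i _ => ?_
    exact_mod_cast Complex.mul_conj' (φ i)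
  rw [this, hφ]; norm_num

lemma key {d : ℕ} (ψ : Fin 2 → ℂ) (χ : Fin 2 × Fin d → ℂ)
    (hs : ∀ a b, (∑ x, χ (a, x) * star (χ (b, x))) = ψ a * star (ψ b)) (x : Fin d) :
    ψ 1 * χ (0, x) = ψ 0 * χ (1, x) := by
  set u : Fin d → ℂ := fun x => ψ 1 * χ (0, x) - ψ 0 * χ (1, x) with hu
  have hsum : (∑ x, u x * star (u x)) = 0 := by
    have expand : (∑ x, u x * star (u x))
        = ψ 1 * star (ψ 1) * (∑ x, χ (0,x) * star (χ (0,x)))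
          - ψ 1 * star (ψ 0) * (∑ x, χ (0,x) * star (χ (1,x)))
          - (ψ 0 * star (ψ 1) * (∑ x, χ (1,x) * star (χ (0,x)))
          - ψ 0 * star (ψ 0) * (∑ x, χ (1,x) * star (χ (1,x)))) := by
      simp only [hu, star_sub, star_mul', Finset.mul_sum, ← Finset.sum_sub_distrib]
      refine Finset.sum_congr rfl fun x _ => ?_
      ring
    rw [expand, hs 0 0, hs 0 1, hs 1 0, hs 1 1]
    ring
  have h2 : (∑ x, Complex.normSq (u x)) = 0 := by
    have : ((∑ x, Complex.normSq (u x) : ℝ) : ℂ) = 0 := by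
      push_cast
      rw [← hsum]
      exact Finset.sum_congr rfl fun x _ => (Complex.mul_conj (u x)).symm
    exact_mod_cast this
  have h3 := (Finset.sum_eq_zero_iff_of_nonneg
    (fun x _ => Complex.normSq_nonneg (u x))).mp h2 x (Finset.mem_univ x)
  have := Complex.normSq_eq_zero.mp h3
  have : u x = 0 := this
  rw [hu] at this
  linear_combination this

variable {d : ℕ} (U : Matrix (Fin 2 × Fin d) (Fin 2 × Fin d) ℂ)

lemma entry_key
    (h : ∀ ρ : Matrix (Fin 2 × Fin d) (Fin 2 × Fin d) ℂ, ρ.PosSemidef → ρ.trace = 1 →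
      ∀ ψ : Fin 2 → ℂ, (∑ i, ‖ψ i‖ ^ 2) = 1 →
        ptraceH ρ = proj ψ → ptraceH (U * ρ * Uᴴ) = proj ψ)
    (ψ : Fin 2 → ℂ) (hψ : (∑ i, ‖ψ i‖ ^ 2) = 1) (y : Fin d) (x : Fin d) :
    ψ 1 * (∑ b, U (0,x) (b,y) * ψ b) = ψ 0 * (∑ b, U (1,x) (b,y) * ψ b) := by
  set φ : Fin 2 × Fin d → ℂ := fun p => ψ p.1 * (if p.2 = y then 1 else 0) with hφ
  have hφnorm : (∑ p, ‖φ p‖ ^ 2) = 1 := by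
    have hrow : ∀ a : Fin 2, (∑ x, ‖φ (a, x)‖ ^ 2) = ‖ψ a‖ ^ 2 := by
      intro a
      rw [Finset.sum_eq_single y]
      · simp [hφ]
      · intro z _ hz; simp [hφ, hz]
      · simp
    rw [Fintype.sum_prod_type]
    simp only [hrow]
    exact hψ
  have hptr : ptraceH (proj φ) = proj ψ := by
    ext a b
    simp only [ptraceH, proj, Matrix.of_apply, hφ, star_mul']
    rw [Finset.sum_eq_single y]
    · simp
    · intro z _ hz; simp [hz]
    · simp
  have hres := h (proj φ) (proj_psd φ) (proj_trace φ hφnorm) ψ hψ hptr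
  rw [proj_conj] at hres
  set χ := U.mulVec φ with hχdef
  have hs : ∀ a b, (∑ x, χ (a, x) * star (χ (b, x))) = ψ a * star (ψ b) := by
    intro a b
    have := congrFun (congrFun hres a) b
    simpa [ptraceH, proj] using this
  have hk := key ψ χ hs x
  have hχ : ∀ a x, χ (a, x) = ∑ b, U (a,x) (b,y) * ψ b := by
    intro a x
    simp only [hχdef, Matrix.mulVec, dotProduct, hφ, Fintype.sum_prod_type,
      mul_ite, mul_one, mul_zero, mul_comm]
    refine Finset.sum_congr rfl fun b _ => ?_
    rw [Finset.sum_eq_single y] <;> simp_all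
  rw [hχ 0 x, hχ 1 x] at hk
  exact hk



/-- If conjugation by a unitary `U` on `ℂ² ⊗ H` preserves the reduced state of the first
qubit whenever that reduced state is a pure state `|ψ⟩⟨ψ|`, then `U = e^{iθ}(I₂ ⊗ V)`
for some unitary `V` on `H` and some phase `θ`. -/
theorem stmt13 {d : ℕ} (U : Matrix (Fin 2 × Fin d) (Fin 2 × Fin d) ℂ)
    (hU : U ∈ Matrix.unitaryGroup (Fin 2 × Fin d) ℂ)
    (h : ∀ ρ : Matrix (Fin 2 × Fin d) (Fin 2 × Fin d) ℂ, ρ.PosSemidef → ρ.trace = 1 →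
      ∀ ψ : Fin 2 → ℂ, (∑ i, ‖ψ i‖ ^ 2) = 1 →
        ptraceH ρ = proj ψ → ptraceH (U * ρ * Uᴴ) = proj ψ) :
    ∃ (θ : ℝ) (V : Matrix (Fin d) (Fin d) ℂ), V ∈ Matrix.unitaryGroup (Fin d) ℂ ∧
      U = Complex.exp (θ * Complex.I) • ((1 : Matrix (Fin 2) (Fin 2) ℂ) ⊗ₖ V) := by
  have hmain : ∀ ψ : Fin 2 → ℂ, (∑ i, ‖ψ i‖ ^ 2) = 1 → ∀ y x : Fin d,
      ψ 1 * (∑ b, U (0,x) (b,y) * ψ b) = ψ 0 * (∑ b, U (1,x) (b,y) * ψ b) :=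
    fun ψ hψ y x => entry_key U h ψ hψ y x
  have h10 : ∀ x y : Fin d, U (1,x) (0,y) = 0 := by
    intro x y
    have := hmain (fun a => if a = 0 then 1 else 0) (by simp [Fin.sum_univ_two]) y x
    simpa [Fin.sum_univ_two] using this.symm
  have h01 : ∀ x y : Fin d, U (0,x) (1,y) = 0 := by
    intro x y
    have := hmain (fun a => if a = 1 then 1 else 0) (by simp [Fin.sum_univ_two]) y x
    simpa [Fin.sum_univ_two] using this
  have hd : ∀ x y : Fin d, U (0,x) (0,y) = U (1,x) (1,y) := by
    intro x y
    set r : ℂ := (((Real.sqrt 2)⁻¹ : ℝ) : ℂ) with hr_def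
    have hr : r ≠ 0 := by
      simp only [hr_def, ne_eq, Complex.ofReal_eq_zero, inv_eq_zero]
      positivity
    have hn : (∑ i : Fin 2, ‖(fun _ : Fin 2 => r) i‖ ^ 2) = 1 := by
      have habs : ‖r‖ ^ 2 = (2:ℝ)⁻¹ := by
        rw [hr_def, Complex.norm_real, Real.norm_eq_abs, abs_of_nonneg (by positivity), ← Real.sqrt_inv,
          Real.sq_sqrt (by norm_num)]
      simp only [Fin.sum_univ_two, habs]
      norm_num
    have hk := hmain (fun _ => r) hn y x
    simp only [Fin.sum_univ_two, h10, h01, zero_mul, add_zero, zero_add] at hk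
    have := mul_left_cancel₀ hr hk
    exact mul_right_cancel₀ hr this
  refine ⟨0, Matrix.of fun x y => U (0,x) (0,y), ?_, ?_⟩
  · rw [Matrix.mem_unitaryGroup_iff]
    have h1 : U * star U = 1 := Matrix.mem_unitaryGroup_iff.mp hU
    ext x y
    have hxy := congrFun (congrFun h1 (0,x)) (0,y)
    rw [Matrix.mul_apply, Fintype.sum_prod_type] at hxy
    simp only [Fin.sum_univ_two, Matrix.star_apply, Matrix.conjTranspose_apply, h01,
      star_zero, mul_zero, Finset.sum_const_zero, add_zero] at hxy
    simp only [Matrix.mul_apply, Matrix.star_apply, Matrix.of_apply, Matrix.one_apply]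
    rw [hxy]
    simp [Matrix.one_apply, Prod.ext_iff]
  · have he : Complex.exp (((0:ℝ):ℂ) * Complex.I) = 1 := by simp
    rw [he, one_smul]
    ext ⟨a, x⟩ ⟨b, y⟩
    fin_cases a <;> fin_cases b <;>
      simp [Matrix.one_apply, h10, h01, ← hd]
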